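/- (Proposition 1, robustified CBF condition) Let h : ℝⁿ → ℝ be differentiable almost everywhere with ∂h/∂q = b(q) + δ(q), where ‖δ(q)‖ ≤ 2J for almost all q along trajectories. Suppose the control v(t) = q̇(t) satisfies ‖q̇(t)‖ ≤ q̇_max for all t and the robustified constraint b(q(t)) · v(t) ≥ -α·h(q(t)) + 2J·q̇_max. Then d/dt h(q(t)) ≥ -α·h(q(t)) for almost all t, and hence if h(q(t₀)) ≥ 0 then h(q(t)) ≥ 0 for all t ≥ t₀. -/

import Mathlib

/-!
Cauchy–Schwarz bounds the disturbance term `⟪δ, v⟫` below by `-2J·q̇_max`, which the robustified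
constraint absorbs, so `ḣ ≥ -α h` almost everywhere. Hence `e^{αt} h(q t)` has an a.e. nonnegative
derivative. Being differentiable everywhere, it is monotone: a differentiable function maps null
sets to null sets, so it cannot decrease across the exceptional set, and `h(q t) ≥ 0` follows.
-/

open Real MeasureTheory Set

theorem le_of_hasDerivAt_pos_of_null_image {f f' : ℝ → ℝ} {a b : ℝ} {N : Set ℝ} (hab : a ≤ b)
    (hf : ∀ t ∈ Icc a b, HasDerivAt f (f' t) t) (hN : volume (f '' N) = 0)
    (hf' : ∀ t ∈ Icc a b, t ∉ N → 0 < f' t) : f a ≤ f b := by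
  by_contra! hba
  obtain ⟨z, ⟨hbz, hza⟩, hzN⟩ : (Ioo (f b) (f a) \ f '' N).Nonempty := by
    refine sdiff_nonempty.mpr fun hsub => ?_
    have := measure_mono_null hsub hN
    rw [Real.volume_Ioo, ENNReal.ofReal_eq_zero] at this
    linarith
  -- As `z ∉ f '' N`, `f' > 0` wherever `f = z`, so `f` never drops below the level `z`.
  have hz_le : z ≤ f b :=
    image_le_of_deriv_right_lt_deriv_boundary' continuousOn_const
      (fun _ _ => hasDerivWithinAt_const _ _ _) hza.le
      (fun t ht => (hf t ht).continuousAt.continuousWithinAt)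
      (fun t ht => (hf t (Ico_subset_Icc_self ht)).hasDerivWithinAt)
      (fun t ht hzt => hf' t (Ico_subset_Icc_self ht) fun htN => hzN ⟨t, htN, hzt.symm⟩)
      (right_mem_Icc.mpr hab)
  linarith

theorem le_of_hasDerivAt_ae_nonneg {f f' : ℝ → ℝ} {a b : ℝ} (hab : a ≤ b)
    (hf : ∀ t ∈ Icc a b, HasDerivAt f (f' t) t)
    (hf' : ∀ᵐ t ∂volume.restrict (Icc a b), 0 ≤ f' t) : f a ≤ f b := by
  set N := {t ∈ Icc a b | f' t < 0}
  have hN : volume N = 0 := by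
    rw [ae_restrict_iff' measurableSet_Icc, ae_iff] at hf'
    refine measure_mono_null (fun t ht => ?_) hf'
    simpa [N, and_assoc] using ht
  -- The perturbation `f + ε • id` has positive derivative off `N`; let `ε → 0`.
  have hε : ∀ ε > 0, f a + ε * a ≤ f b + ε * b := by
    intro ε hε
    have hg : ∀ t ∈ Icc a b, HasDerivAt (fun s => f s + ε * s) (f' t + ε) t := fun t ht =>
      ((hf t ht).add ((hasDerivAt_id t).const_mul ε)).congr_deriv (by simp)
    refine le_of_hasDerivAt_pos_of_null_image (N := N) hab hg ?_ fun t ht htN => ?_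
    · exact addHaar_image_eq_zero_of_differentiableOn_of_addHaar_eq_zero volume
        (fun t ht => (hg t ht.1).differentiableAt.differentiableWithinAt) hN
    · have : 0 ≤ f' t := by simpa [N, ht.1, ht.2] using htN
      linarith
  refine le_of_forall_pos_le_add fun η hη => ?_
  have hpos : 0 < b - a + 1 := by linarith
  have hη' : η / (b - a + 1) * (b - a) ≤ η := by
    rw [div_mul_eq_mul_div, div_le_iff₀ hpos]; nlinarith
  linarith [hε (η / (b - a + 1)) (div_pos hη hpos)]

theorem monotoneOn_of_hasDerivAt_ae_nonneg {f f' : ℝ → ℝ} {a : ℝ}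
    (hf : ∀ t ∈ Ici a, HasDerivAt f (f' t) t)
    (hf' : ∀ᵐ t ∂volume.restrict (Ici a), 0 ≤ f' t) : MonotoneOn f (Ici a) :=
  fun _ hx _ _ hxy =>
    le_of_hasDerivAt_ae_nonneg hxy (fun t ht => hf t (le_trans hx ht.1))
      (ae_restrict_of_ae_restrict_of_subset (Icc_subset_Ici_iff hxy |>.mpr hx) hf')

theorem monotoneOn_exp_mul_of_hasDerivAt {φ φ' : ℝ → ℝ} {a α : ℝ}
    (hφ : ∀ t ∈ Ici a, HasDerivAt φ (φ' t) t)
    (hφ' : ∀ᵐ t ∂volume.restrict (Ici a), -α * φ t ≤ φ' t) :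
    MonotoneOn (fun t => exp (α * t) * φ t) (Ici a) := by
  have hexp (t : ℝ) : HasDerivAt (fun s => exp (α * s)) (exp (α * t) * α) t := by
    simpa using ((hasDerivAt_id t).const_mul α).exp
  refine monotoneOn_of_hasDerivAt_ae_nonneg (fun t ht => (hexp t).mul (hφ t ht)) ?_
  filter_upwards [hφ'] with t ht
  have : 0 ≤ exp (α * t) * (α * φ t + φ' t) := mul_nonneg (exp_pos _).le (by linarith)
  linarith

theorem neg_mul_le_real_inner_of_norm_le {E : Type*} [NormedAddCommGroup E] [InnerProductSpace ℝ E]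
    {x y : E} {c m : ℝ} (hx : ‖x‖ ≤ c) (hy : ‖y‖ ≤ m) : -(c * m) ≤ inner ℝ x y := by
  have := abs_real_inner_le_norm x y
  have : ‖x‖ * ‖y‖ ≤ c * m := mul_le_mul hx hy (norm_nonneg _) ((norm_nonneg _).trans hx)
  linarith [neg_abs_le (inner ℝ x y)]

theorem robustified_cbf_condition_general
    {n : ℕ} (h : EuclideanSpace ℝ (Fin n) → ℝ)
    (b : EuclideanSpace ℝ (Fin n) → EuclideanSpace ℝ (Fin n))
    (δ : ℝ → EuclideanSpace ℝ (Fin n))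
    (q v : ℝ → EuclideanSpace ℝ (Fin n))
    (t₀ α J qdotmax : ℝ)
    (hchain : ∀ t ≥ t₀,
      HasDerivAt (fun s => h (q s))
        ((inner ℝ (b (q t)) (v t) : ℝ) + (inner ℝ (δ t) (v t) : ℝ)) t)
    (hδ : ∀ᵐ t ∂(volume.restrict (Set.Ici t₀)), ‖δ t‖ ≤ 2 * J)
    (hv : ∀ t ≥ t₀, ‖v t‖ ≤ qdotmax)
    (hcon : ∀ t ≥ t₀, (inner ℝ (b (q t)) (v t) : ℝ) ≥ -α * h (q t) + 2 * J * qdotmax) :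
    (∀ᵐ t ∂(volume.restrict (Set.Ici t₀)),
        deriv (fun s => h (q s)) t ≥ -α * h (q t)) ∧
    (h (q t₀) ≥ 0 → ∀ t ≥ t₀, h (q t) ≥ 0) := by
  have hcbf : ∀ᵐ t ∂(volume.restrict (Ici t₀)),
      -α * h (q t) ≤ inner ℝ (b (q t)) (v t) + inner ℝ (δ t) (v t) := by
    filter_upwards [hδ, ae_restrict_mem measurableSet_Ici] with t hδt ht
    linarith [hcon t ht, neg_mul_le_real_inner_of_norm_le hδt (hv t ht)]
  refine ⟨?_, fun h₀ t ht => ?_⟩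
  · filter_upwards [hcbf, ae_restrict_mem measurableSet_Ici] with t hcbf_t ht
    rwa [(hchain t ht).deriv]
  · have hmono := monotoneOn_exp_mul_of_hasDerivAt hchain hcbf self_mem_Ici ht ht
    exact nonneg_of_mul_nonneg_right (le_trans (by positivity) hmono) (exp_pos _)

/-- Proposition 1 (robustified CBF condition): if the gradient of h splits
as a continuous part b plus a disturbance δ bounded (a.e.) by 2J, the
velocity is bounded by q̇_max, and the robustified constraint holds, then
ḣ ≥ -α·h almost everywhere, and the safe set {h ≥ 0} is forward invariant. -/
theorem robustified_cbf_condition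
    {n : ℕ} (h : EuclideanSpace ℝ (Fin n) → ℝ)
    (b : EuclideanSpace ℝ (Fin n) → EuclideanSpace ℝ (Fin n))
    (δ : ℝ → EuclideanSpace ℝ (Fin n))
    (q v : ℝ → EuclideanSpace ℝ (Fin n))
    (t₀ α J qdotmax : ℝ)
    (hα : 0 < α) (hJ : 0 ≤ J) (hqd : 0 ≤ qdotmax)
    (hq : ∀ t ≥ t₀, HasDerivAt q (v t) t)
    (hchain : ∀ t ≥ t₀,
      HasDerivAt (fun s => h (q s))
        ((inner ℝ (b (q t)) (v t) : ℝ) + (inner ℝ (δ t) (v t) : ℝ)) t)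
    (hδ : ∀ᵐ t ∂(volume.restrict (Set.Ici t₀)), ‖δ t‖ ≤ 2 * J)
    (hv : ∀ t ≥ t₀, ‖v t‖ ≤ qdotmax)
    (hcon : ∀ t ≥ t₀, (inner ℝ (b (q t)) (v t) : ℝ) ≥ -α * h (q t) + 2 * J * qdotmax) :
    (∀ᵐ t ∂(volume.restrict (Set.Ici t₀)),
        deriv (fun s => h (q s)) t ≥ -α * h (q t)) ∧
    (h (q t₀) ≥ 0 → ∀ t ≥ t₀, h (q t) ≥ 0) :=
  robustified_cbf_condition_general h b δ q v t₀ α J qdotmax hchain hδ hv hcon
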